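/- Suppose $\mathfrak{m}^{n+1} : \mathfrak{m} = \mathfrak{m}^n$ for all $n \geq r$ (where $r = \mathrm{reg}_{\mathcal{R}(\mathfrak{m})}\mathcal{R}(\mathfrak{m})$). Then for $I = \mathfrak{m}^j$ with $j \geq 2$, one has $I\mathfrak{m}^{n+1} : \mathfrak{m} = I\mathfrak{m}^n$ for all $n \geq \max\{r - j, 0\}$; in particular $\mathfrak{d}_3(\mathfrak{m}^j) \leq \max\{r - j, 0\}$, and if $j \geq r$ then $\mathfrak{d}_3(\mathfrak{m}^j) = 0$. -/

import Mathlib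

open IsLocalRing

variable {R : Type*} [CommRing R] [IsLocalRing R]

/-- The third Dao number `𝔡₃(I) = min {t | I𝔪^(k+1) : 𝔪 = I𝔪^k for all k ≥ t}`. -/
noncomputable def daoNumber3 (I : Ideal R) : ℕ :=
  sInf {t | ∀ k ≥ t,
    Submodule.colon (I * maximalIdeal R ^ (k + 1)) (maximalIdeal R) = I * maximalIdeal R ^ k}

theorem Ideal.colon_pow_mul_pow_succ {A : Type*} [CommSemiring A] {𝔪 : Ideal A} {r : ℕ}
    (hr : ∀ n ≥ r, Submodule.colon (𝔪 ^ (n + 1)) (𝔪 : Set A) = 𝔪 ^ n) {j n : ℕ}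
    (hjn : r ≤ j + n) :
    Submodule.colon (𝔪 ^ j * 𝔪 ^ (n + 1)) (𝔪 : Set A) = 𝔪 ^ j * 𝔪 ^ n := by
  rw [← pow_add, ← pow_add, ← add_assoc]
  exact hr (j + n) hjn

theorem daoNumber3_le_of_forall_colon {I : Ideal R} {t : ℕ}
    (h : ∀ k ≥ t, Submodule.colon (I * maximalIdeal R ^ (k + 1)) (maximalIdeal R) =
      I * maximalIdeal R ^ k) :
    daoNumber3 I ≤ t :=
  Nat.sInf_le h

theorem daoNumber3_pow_le_general {R : Type*} [CommRing R] [IsLocalRing R]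
    (r : ℕ)
    (hr : ∀ n ≥ r, Submodule.colon (maximalIdeal R ^ (n + 1)) (maximalIdeal R) =
      maximalIdeal R ^ n)
    (j : ℕ) :
    (∀ n ≥ r - j,
        Submodule.colon (maximalIdeal R ^ j * maximalIdeal R ^ (n + 1)) (maximalIdeal R) =
          maximalIdeal R ^ j * maximalIdeal R ^ n) ∧
      daoNumber3 (maximalIdeal R ^ j) ≤ r - j ∧
      (r ≤ j → daoNumber3 (maximalIdeal R ^ j) = 0) := by
  have hcolon : ∀ n ≥ r - j,
      Submodule.colon (maximalIdeal R ^ j * maximalIdeal R ^ (n + 1)) (maximalIdeal R) =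
        maximalIdeal R ^ j * maximalIdeal R ^ n :=
    fun n hn => Ideal.colon_pow_mul_pow_succ hr (by omega)
  have hle : daoNumber3 (maximalIdeal R ^ j) ≤ r - j := daoNumber3_le_of_forall_colon hcolon
  exact ⟨hcolon, hle, fun hrj => by omega⟩

/-- If `𝔪^(n+1) : 𝔪 = 𝔪^n` for all `n ≥ r`, then for `I = 𝔪^j` with `j ≥ 2` we have
`I𝔪^(n+1) : 𝔪 = I𝔪^n` for all `n ≥ max{r - j, 0}`; in particular
`𝔡₃(𝔪^j) ≤ max{r - j, 0}`, and `𝔡₃(𝔪^j) = 0` if `j ≥ r`. -/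
theorem daoNumber3_pow_le {R : Type*} [CommRing R] [IsNoetherianRing R] [IsLocalRing R]
    [Infinite (IsLocalRing.ResidueField R)]
    (hdepth : ∃ x ∈ maximalIdeal R, x ∈ nonZeroDivisors R)
    (r : ℕ)
    (hr : ∀ n ≥ r, Submodule.colon (maximalIdeal R ^ (n + 1)) (maximalIdeal R) =
      maximalIdeal R ^ n)
    (j : ℕ) (hj : 2 ≤ j) :
    (∀ n ≥ r - j,
        Submodule.colon (maximalIdeal R ^ j * maximalIdeal R ^ (n + 1)) (maximalIdeal R) =
          maximalIdeal R ^ j * maximalIdeal R ^ n) ∧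
      daoNumber3 (maximalIdeal R ^ j) ≤ r - j ∧
      (r ≤ j → daoNumber3 (maximalIdeal R ^ j) = 0) :=
  daoNumber3_pow_le_general r hr j
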